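/- arXiv:2009.00124 — 3 statements merged into one kernel-verified Lean document; each statement's English description precedes it below -/
import Mathlib

section
/- The center of the Artin braid group B₃ is the cyclic subgroup generated by Δ² = (σ₁σ₂)³; that is, Subgroup.center B₃ = Subgroup.zpowers ((σ₁σ₂)³), and moreover the element (σ₁σ₂)³ has infinite order in B₃. -/
/-- The braid relator `σ₁σ₂σ₁σ₂⁻¹σ₁⁻¹σ₂⁻¹` in the free group on two generators. -/
def braidRel3 : Set (FreeGroup (Fin 2)) :=
  {FreeGroup.of 0 * FreeGroup.of 1 * FreeGroup.of 0 *
    (FreeGroup.of 1)⁻¹ * (FreeGroup.of 0)⁻¹ * (FreeGroup.of 1)⁻¹}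

/-- The Artin braid group on 3 strands. -/
abbrev BraidGroup3 : Type := PresentedGroup braidRel3

/-- The standard generators σ₁, σ₂ of the braid group `B₃`. -/
def σ (i : Fin 2) : BraidGroup3 := PresentedGroup.of i

/-- The full twist Δ² = (σ₁σ₂)³. -/
def Δsq : BraidGroup3 := (σ 0 * σ 1) ^ 3

/-!
Conjugation by the half twist `Δ = σ₁σ₂σ₁` swaps `σ₁` and `σ₂`, so `Δ² = Δ · Δ` is central.
Modulo `Δ²`, the elements `Δ` and `σ₁σ₂` have orders dividing 2 and 3, and
`σ₁ ↦ b⁻¹a`, `σ₂ ↦ a⁻¹b²` is a surjection of `B₃` onto `C₂ * C₃ = ⟨a⟩ * ⟨b⟩` whose composite with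
`a ↦ Δ`, `b ↦ σ₁σ₂` is the quotient map `B₃ → B₃ ⧸ ⟨Δ²⟩`. A central element of `B₃` therefore
maps to the center of `C₂ * C₃`, which is trivial by comparing reduced words, and so lies in
`⟨Δ²⟩`. The exponent sum `B₃ → ℤ` sends `Δ²` to `6`, so `Δ²` has infinite order.
-/

open Cardinal Monoid

namespace Monoid.CoprodI

variable {ι : Type*} {G : ι → Type*} [∀ i, Group (G i)]

namespace NeWord

theorem eq_of_prod_eq {i j k l : ι} {u : NeWord G i j} {v : NeWord G k l}
    (h : u.prod = v.prod) : i = k ∧ j = l := by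
  classical
  have hl : u.toList = v.toList := congrArg Word.toList (Word.equiv.symm.injective h)
  have hhead := u.toList_head?
  have hlast := u.toList_getLast?
  rw [hl, v.toList_head?, Option.some_inj] at hhead
  rw [hl, v.toList_getLast?, Option.some_inj] at hlast
  exact ⟨(congrArg Sigma.fst hhead).symm, (congrArg Sigma.fst hlast).symm⟩

theorem exists_not_commute_of_ne_of_ne {i j k : ι} [Nontrivial (G k)] (hki : k ≠ i) (hkj : k ≠ j)
    (w : NeWord G i j) : ∃ g, ¬Commute g w.prod := by
  obtain ⟨x, hx⟩ := exists_ne (1 : G k)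
  refine ⟨of x, fun hc => hki (eq_of_prod_eq (u := (singleton x hx).append hki w)
    (v := w.append hkj.symm (singleton x hx)) ?_).1⟩
  rw [append_prod, append_prod, prod_singleton, hc.eq]

theorem exists_not_commute_of_three_le_mk {i j : ι} (hij : i ≠ j) (hcard : 3 ≤ #(G i))
    (w : NeWord G i j) : ∃ g, ¬Commute g w.prod := by
  obtain ⟨y, hy, hyw⟩ := exists_ne_ne_of_three_le hcard 1 w.head⁻¹
  have hyw : y * w.head ≠ 1 := fun h => hyw (eq_inv_of_mul_eq_one_left h)
  refine ⟨of y, fun hc => hij (eq_of_prod_eq (u := w.mulHead y hyw)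
    (v := w.append hij.symm (singleton y hy)) ?_).2.symm⟩
  rw [mulHead_prod, append_prod, prod_singleton, hc.eq]

end NeWord

theorem exists_neWord_prod_eq {z : CoprodI G} (hz : z ≠ 1) :
    ∃ (i j : ι) (w : NeWord G i j), w.prod = z := by
  classical
  obtain ⟨i, j, w, hw⟩ := NeWord.of_word (Word.equiv z) fun h => hz <| by
    rw [← Word.equiv.symm_apply_apply z, h]; exact Word.prod_empty
  exact ⟨i, j, w, by rw [NeWord.prod, hw]; exact Word.equiv.symm_apply_apply z⟩

theorem center_eq_bot [Nontrivial ι] [∀ i, Nontrivial (G i)]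
    (hcard : 3 ≤ #ι ∨ ∃ i, 3 ≤ #(G i)) : Subgroup.center (CoprodI G) = ⊥ := by
  refine (Subgroup.eq_bot_iff_forall _).2 fun z hz => by_contra fun hne => ?_
  obtain ⟨i, j, w, rfl⟩ := exists_neWord_prod_eq hne
  suffices ∃ g, ¬Commute g w.prod from
    this.elim fun g hg => hg (Subgroup.mem_center_iff.1 hz g)
  by_cases hk : ∃ k, k ≠ i ∧ k ≠ j
  · obtain ⟨k, hki, hkj⟩ := hk
    exact w.exists_not_commute_of_ne_of_ne hki hkj
  push Not at hk
  have hij : i ≠ j := fun h => by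
    obtain ⟨k, hki⟩ := exists_ne i
    exact hki ((hk k hki).trans h.symm)
  rcases hcard with hcard | ⟨a, hcard⟩
  · obtain ⟨k, hki, hkj⟩ := exists_ne_ne_of_three_le hcard i j
    exact absurd (hk k hki) hkj
  rcases eq_or_ne a i with rfl | hai
  · exact w.exists_not_commute_of_three_le_mk hij hcard
  · obtain rfl := hk a hai
    obtain ⟨g, hg⟩ := w.inv.exists_not_commute_of_three_le_mk hij.symm hcard
    exact ⟨g, fun hc => hg (w.inv_prod ▸ hc.inv_right)⟩

end Monoid.CoprodI

theorem Subgroup.normal_of_le_center {G : Type*} [Group G] {H : Subgroup G}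
    (hH : H ≤ Subgroup.center G) : H.Normal :=
  ⟨fun n hn g => by rwa [Subgroup.mem_center_iff.1 (hH hn) g, mul_inv_cancel_right]⟩

theorem MonoidHom.map_mem_center_of_surjective {G H : Type*} [Group G] [Group H] {f : G →* H}
    (hf : Function.Surjective f) {z : G} (hz : z ∈ Subgroup.center G) :
    f z ∈ Subgroup.center H :=
  Subgroup.mem_center_iff.2 fun g => by
    obtain ⟨g, rfl⟩ := hf g
    rw [← map_mul, Subgroup.mem_center_iff.1 hz, map_mul]

def ZMod.liftMultiplicative {Q : Type*} [Group Q] (n : ℕ) (q : Q) (hq : q ^ n = 1) :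
    Multiplicative (ZMod n) →* Q :=
  AddMonoidHom.toMultiplicativeLeft <| ZMod.lift n
    ⟨zmultiplesHom (Additive Q) (Additive.ofMul q), by
      rw [zmultiplesHom_apply, natCast_zsmul, ← ofMul_pow, hq, ofMul_one]⟩

theorem ZMod.liftMultiplicative_ofAdd_one {Q : Type*} [Group Q] (n : ℕ) (q : Q)
    (hq : q ^ n = 1) : ZMod.liftMultiplicative n q hq (Multiplicative.ofAdd 1) = q := by
  rw [ZMod.liftMultiplicative, AddMonoidHom.coe_toMultiplicativeLeft, Function.comp_apply,
    Function.comp_apply, toAdd_ofAdd, ← Int.cast_one, ZMod.lift_coe, zmultiplesHom_apply, one_smul,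
    toMul_ofMul]

theorem Multiplicative.ofAdd_one_pow_val {n : ℕ} [NeZero n] (m : Multiplicative (ZMod n)) :
    Multiplicative.ofAdd 1 ^ (Multiplicative.toAdd m).val = m := by
  rw [← ofAdd_nsmul, nsmul_one, ZMod.natCast_zmod_val]; rfl

namespace BraidGroup3

theorem braid_rel : σ 0 * σ 1 * σ 0 = σ 1 * σ 0 * σ 1 :=
  PresentedGroup.mk_eq_mk_of_mul_inv_mem (by simp [braidRel3, mul_assoc])

theorem lift_rel_eq_one_iff {H : Type*} [Group H] (f : Fin 2 → H) :
    (∀ r ∈ braidRel3, FreeGroup.lift f r = 1) ↔ f 0 * f 1 * f 0 = f 1 * f 0 * f 1 := by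
  simp only [braidRel3, Set.mem_singleton_iff, forall_eq, map_mul, map_inv,
    FreeGroup.lift_apply_of]
  rw [← mul_inv_eq_one (a := f 0 * f 1 * f 0)]
  simp only [mul_inv_rev, mul_assoc]

def lift {H : Type*} [Group H] (f : Fin 2 → H) (hf : f 0 * f 1 * f 0 = f 1 * f 0 * f 1) :
    BraidGroup3 →* H :=
  PresentedGroup.toGroup ((lift_rel_eq_one_iff f).2 hf)

@[simp]
theorem lift_σ {H : Type*} [Group H] (f : Fin 2 → H) (hf : f 0 * f 1 * f 0 = f 1 * f 0 * f 1)
    (i : Fin 2) : lift f hf (σ i) = f i :=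
  PresentedGroup.toGroup.of _

def halfTwist : BraidGroup3 := σ 0 * σ 1 * σ 0

theorem σ_mul_halfTwist (i : Fin 2) : σ i * halfTwist = halfTwist * σ i.rev := by
  fin_cases i
  · calc σ 0 * (σ 0 * σ 1 * σ 0) = σ 0 * (σ 1 * σ 0 * σ 1) := by rw [braid_rel]
      _ = σ 0 * σ 1 * σ 0 * σ 1 := by group
  · calc σ 1 * (σ 0 * σ 1 * σ 0) = σ 1 * σ 0 * σ 1 * σ 0 := by group
      _ = σ 0 * σ 1 * σ 0 * σ 0 := by rw [braid_rel]

theorem halfTwist_sq : halfTwist ^ 2 = Δsq := by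
  calc halfTwist ^ 2 = halfTwist * (σ 0 * σ 1 * σ 0) := sq _
    _ = halfTwist * (σ 1 * σ 0 * σ 1) := by rw [braid_rel]
    _ = Δsq := by simp only [halfTwist, Δsq, pow_succ, pow_zero, one_mul, mul_assoc]

theorem Δsq_mem_center : Δsq ∈ Subgroup.center BraidGroup3 := by
  have hσ (i : Fin 2) : σ i * Δsq = Δsq * σ i := by
    rw [← halfTwist_sq, sq, ← mul_assoc, σ_mul_halfTwist, mul_assoc, σ_mul_halfTwist,
      Fin.rev_rev, mul_assoc]
  refine Subgroup.mem_center_iff.2 fun g => Subgroup.mem_centralizer_singleton_iff.1 ?_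
  exact PresentedGroup.generated_by _ (Subgroup.centralizer {Δsq})
    (fun i => Subgroup.mem_centralizer_singleton_iff.2 (hσ i)) g

def exponentSum : BraidGroup3 →* Multiplicative ℤ :=
  lift (fun _ => Multiplicative.ofAdd 1) rfl

theorem not_isOfFinOrder_Δsq : ¬IsOfFinOrder Δsq := fun h => by
  have hlen : exponentSum Δsq = Multiplicative.ofAdd 6 := by
    simp only [exponentSum, Δsq, map_pow, map_mul, lift_σ]; rfl
  have := (exponentSum.isOfFinOrder h).eq_one'
  rw [hlen] at this
  exact absurd this (by decide)

def Δroot : Fin 2 → BraidGroup3 := ![halfTwist, σ 0 * σ 1]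

theorem Δroot_pow (i : Fin 2) : Δroot i ^ (i.val + 2) = Δsq := by
  fin_cases i
  · exact halfTwist_sq
  · rfl

abbrev CyclicFactor (i : Fin 2) : Type := Multiplicative (ZMod (i.val + 2))

instance (i : Fin 2) : Nontrivial (CyclicFactor i) :=
  haveI : Nontrivial (ZMod (i.val + 2)) := ZMod.nontrivial_iff.2 (by omega)
  inferInstance

theorem three_le_mk_cyclicFactor_one : 3 ≤ #(CyclicFactor 1) := by
  simp [mk_fintype]

def gen (i : Fin 2) : CoprodI CyclicFactor := CoprodI.of (i := i) (Multiplicative.ofAdd 1)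

theorem gen_pow (i : Fin 2) : gen i ^ (i.val + 2) = 1 := by
  rw [gen, ← map_pow, ← ofAdd_nsmul, nsmul_one, ZMod.natCast_self, ofAdd_zero, map_one]

theorem σ_zero_eq : σ 0 = (Δroot 1)⁻¹ * Δroot 0 := by
  simp only [Δroot, halfTwist, Matrix.cons_val_zero, Matrix.cons_val_one, Matrix.cons_val_fin_one]
  group

theorem σ_one_eq : σ 1 = (Δroot 0)⁻¹ * Δroot 1 ^ 2 := by
  simp only [Δroot, halfTwist, Matrix.cons_val_zero, Matrix.cons_val_one, Matrix.cons_val_fin_one,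
    sq]
  group

-- The words of `σ_zero_eq` and `σ_one_eq`, read in the generators of `C₂ * C₃`.
def toFreeProd : BraidGroup3 →* CoprodI CyclicFactor :=
  lift ![(gen 1)⁻¹ * gen 0, (gen 0)⁻¹ * gen 1 ^ 2] <| by
    have ha : gen 0 ^ 2 = 1 := gen_pow 0
    have hb : gen 1 ^ 3 = 1 := gen_pow 1
    simp only [Matrix.cons_val_zero, Matrix.cons_val_one]
    calc (gen 1)⁻¹ * gen 0 * ((gen 0)⁻¹ * gen 1 ^ 2) * ((gen 1)⁻¹ * gen 0) = gen 0 := by group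
      _ = (gen 0)⁻¹ * gen 1 ^ 3 := by rw [hb, mul_one, eq_inv_iff_mul_eq_one, ← sq, ha]
      _ = _ := by group

theorem toFreeProd_Δroot (i : Fin 2) : toFreeProd (Δroot i) = gen i := by
  fin_cases i <;>
    simp only [Δroot, halfTwist, toFreeProd, map_mul, lift_σ, Matrix.cons_val_zero,
      Matrix.cons_val_one, Fin.zero_eta, Fin.mk_one, Matrix.cons_val_fin_one] <;>
    group

theorem toFreeProd_surjective : Function.Surjective toFreeProd := by
  rw [← MonoidHom.range_eq_top, eq_top_iff]
  rintro x -
  induction x using CoprodI.induction_on with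
  | one => exact one_mem _
  | of i m =>
    rw [← Multiplicative.ofAdd_one_pow_val m, map_pow]
    exact pow_mem (MonoidHom.mem_range.2 ⟨Δroot i, toFreeProd_Δroot i⟩) _
  | mul x y hx hy => exact mul_mem hx hy

instance : (Subgroup.zpowers Δsq).Normal :=
  Subgroup.normal_of_le_center (Subgroup.zpowers_le.2 Δsq_mem_center)

def fromFreeProd : CoprodI CyclicFactor →* BraidGroup3 ⧸ Subgroup.zpowers Δsq :=
  CoprodI.lift fun i => ZMod.liftMultiplicative (i.val + 2) (Δroot i) <| by
    rw [← QuotientGroup.mk_pow, Δroot_pow, QuotientGroup.eq_one_iff]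
    exact Subgroup.mem_zpowers Δsq

theorem fromFreeProd_gen (i : Fin 2) : fromFreeProd (gen i) = Δroot i := by
  rw [fromFreeProd, gen, CoprodI.lift_of, ZMod.liftMultiplicative_ofAdd_one]

theorem fromFreeProd_comp_toFreeProd :
    fromFreeProd.comp toFreeProd = QuotientGroup.mk' (Subgroup.zpowers Δsq) := by
  ext i
  have hΔroot (i : Fin 2) : fromFreeProd (toFreeProd (Δroot i)) = Δroot i := by
    rw [toFreeProd_Δroot, fromFreeProd_gen]
  change fromFreeProd (toFreeProd (σ i)) = σ i
  fin_cases i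
  · simp only [Fin.zero_eta, σ_zero_eq, map_mul, map_inv, hΔroot, QuotientGroup.mk_mul,
      QuotientGroup.mk_inv]
  · simp only [Fin.mk_one, σ_one_eq, map_mul, map_inv, map_pow, hΔroot, QuotientGroup.mk_mul,
      QuotientGroup.mk_inv, QuotientGroup.mk_pow]

theorem center_le_zpowers_Δsq : Subgroup.center BraidGroup3 ≤ Subgroup.zpowers Δsq := by
  intro z hz
  have hz' := MonoidHom.map_mem_center_of_surjective toFreeProd_surjective hz
  rw [CoprodI.center_eq_bot (Or.inr ⟨1, three_le_mk_cyclicFactor_one⟩), Subgroup.mem_bot] at hz'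
  rw [← QuotientGroup.eq_one_iff, ← QuotientGroup.mk'_apply, ← fromFreeProd_comp_toFreeProd,
    MonoidHom.comp_apply, hz', map_one]

end BraidGroup3

/-- The center of `B₃` is generated by the full twist `Δ² = (σ₁σ₂)³`, which has
infinite order. -/
theorem center_braidGroup3 :
    Subgroup.center BraidGroup3 = Subgroup.zpowers Δsq ∧ ¬ IsOfFinOrder Δsq :=
  ⟨le_antisymm BraidGroup3.center_le_zpowers_Δsq
    (Subgroup.zpowers_le.2 BraidGroup3.Δsq_mem_center), BraidGroup3.not_isOfFinOrder_Δsq⟩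
end

section
/- The homomorphism π : B₃ → Equiv.Perm (Fin 3) is surjective, and its kernel P₃ is generated, as a subgroup of B₃, by the three elements σ₁², σ₂², and Δ² = (σ₁σ₂)³. -/
/-- The transpositions `(0 1)` and `(1 2)` in the symmetric group `S₃`. -/
def permGen : Fin 2 → Equiv.Perm (Fin 3) := ![Equiv.swap 0 1, Equiv.swap 1 2]

lemma permGen_rel : ∀ r ∈ braidRel3, FreeGroup.lift permGen r = 1 := by
  intro r hr
  rw [braidRel3, Set.mem_singleton_iff] at hr
  subst hr
  simp only [map_mul, map_inv, FreeGroup.lift_apply_of]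
  decide

/-- The projection `π : B₃ → S₃` sending `σ₁ ↦ (0 1)` and `σ₂ ↦ (1 2)`. -/
def πB3 : BraidGroup3 →* Equiv.Perm (Fin 3) := PresentedGroup.toGroup permGen_rel

/-!
The six permutation braids `T` form a Schreier transversal for `π`. By the braid relation each
Schreier generator `t σᵢ t'⁻¹` (`t, t' ∈ T`) is one of `1`, `σ₁²`, `σ₂²`, `σ₂⁻² Δ² σ₁⁻²`,
`σ₁⁻² Δ² σ₂⁻²`, so `H = ⟨σ₁², σ₂², Δ²⟩` satisfies `H T σᵢ^{±1} ⊆ H T`. Hence `B₃ = H T`, and a pure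
braid `h t` with `h ∈ H` has `π t = 1`, i.e. `t = 1`.
-/

namespace MonoidHom

variable {G Q : Type*} [Group G] [Group Q] {S : Set G} {H : Subgroup G} {t : Q → G}

theorem mul_inv_lift_apply_mem (hS : Subgroup.closure S = ⊤) (f : G →* Q) (ht₁ : t 1 ∈ H)
    (ht : ∀ q, ∀ s ∈ S, t q * s * (t (q * f s))⁻¹ ∈ H) (g : G) : g * (t (f g))⁻¹ ∈ H := by
  induction (hS ▸ Subgroup.mem_top g : g ∈ Subgroup.closure S) using
    Subgroup.closure_induction_right with
  | one => simpa using ht₁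
  | mul_right x _ s hs ih =>
    rw [map_mul, show x * s * (t (f x * f s))⁻¹ =
      x * (t (f x))⁻¹ * (t (f x) * s * (t (f x * f s))⁻¹) by group]
    exact H.mul_mem ih (ht _ s hs)
  | mul_inv_cancel x _ s hs ih =>
    have h := ht (f x * (f s)⁻¹) s hs
    rw [inv_mul_cancel_right] at h
    rw [map_mul, map_inv, show x * s⁻¹ * (t (f x * (f s)⁻¹))⁻¹ =
      x * (t (f x))⁻¹ * (t (f x * (f s)⁻¹) * s * (t (f x))⁻¹)⁻¹ by group]
    exact H.mul_mem ih (H.inv_mem h)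

theorem ker_le_of_lift_mul_inv_mem (hS : Subgroup.closure S = ⊤) (f : G →* Q) (ht₁ : t 1 ∈ H)
    (ht : ∀ q, ∀ s ∈ S, t q * s * (t (q * f s))⁻¹ ∈ H) : f.ker ≤ H := fun g hg => by
  simpa [f.mem_ker.mp hg, H.mul_mem_cancel_right (H.inv_mem ht₁)] using
    f.mul_inv_lift_apply_mem hS ht₁ ht g

end MonoidHom

lemma σ_braid : σ 0 * σ 1 * σ 0 = σ 1 * σ 0 * σ 1 := by
  have h : σ 0 * σ 1 * σ 0 * (σ 1)⁻¹ * (σ 0)⁻¹ * (σ 1)⁻¹ = 1 := PresentedGroup.one_of_mem rfl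
  rw [← mul_inv_eq_one, ← h]
  group

lemma σ_braid_assoc (x : BraidGroup3) : σ 0 * (σ 1 * (σ 0 * x)) = σ 1 * (σ 0 * (σ 1 * x)) := by
  simp only [← mul_assoc, σ_braid]

lemma Δsq_eq_pow_σ_one_mul_σ_zero : Δsq = (σ 1 * σ 0) ^ 3 :=
  calc (σ 0 * σ 1) ^ 3 = (σ 0 * σ 1 * σ 0) * (σ 1 * σ 0 * σ 1) := by
        simp only [pow_succ, pow_zero, one_mul, mul_assoc]
    _ = (σ 1 * σ 0 * σ 1) * (σ 0 * σ 1 * σ 0) := by rw [σ_braid]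
    _ = (σ 1 * σ 0) ^ 3 := by simp only [pow_succ, pow_zero, one_mul, mul_assoc]

lemma closure_range_σ : Subgroup.closure (Set.range σ) = ⊤ :=
  PresentedGroup.closure_range_of braidRel3

lemma πB3_σ (i : Fin 2) : πB3 (σ i) = permGen i := PresentedGroup.toGroup.of permGen_rel

lemma Equiv.Perm.fin_three_cases (p : Equiv.Perm (Fin 3)) :
    p = 1 ∨ p = Equiv.swap 0 1 ∨ p = Equiv.swap 1 2 ∨
    p = Equiv.swap 0 1 * Equiv.swap 1 2 ∨ p = Equiv.swap 1 2 * Equiv.swap 0 1 ∨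
    p = Equiv.swap 0 1 * Equiv.swap 1 2 * Equiv.swap 0 1 := by
  revert p; decide

/-- The permutation braids: the positive lifts in which any two strands cross at most once. -/
def braidLift (p : Equiv.Perm (Fin 3)) : BraidGroup3 :=
  if p = 1 then 1
  else if p = Equiv.swap 0 1 then σ 0
  else if p = Equiv.swap 1 2 then σ 1
  else if p = Equiv.swap 0 1 * Equiv.swap 1 2 then σ 0 * σ 1
  else if p = Equiv.swap 1 2 * Equiv.swap 0 1 then σ 1 * σ 0
  else σ 0 * σ 1 * σ 0

lemma braidLift_one : braidLift 1 = 1 := if_pos rfl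

lemma πB3_braidLift (p : Equiv.Perm (Fin 3)) : πB3 (braidLift p) = p := by
  rcases p.fin_three_cases with rfl | rfl | rfl | rfl | rfl | rfl <;> decide

lemma braidLift_mul_σ_mul_inv_mem (p : Equiv.Perm (Fin 3)) (i : Fin 2) :
    braidLift p * σ i * (braidLift (p * permGen i))⁻¹ ∈
      Subgroup.closure {σ 0 ^ 2, σ 1 ^ 2, Δsq} := by
  set P := Subgroup.closure {σ 0 ^ 2, σ 1 ^ 2, Δsq}
  have h₀ : σ 0 ^ 2 ∈ P := Subgroup.subset_closure (by simp)
  have h₁ : σ 1 ^ 2 ∈ P := Subgroup.subset_closure (by simp)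
  have hΔ : Δsq ∈ P := Subgroup.subset_closure (by simp)
  rcases p.fin_three_cases with rfl | rfl | rfl | rfl | rfl | rfl <;> fin_cases i <;>
    simp +decide [braidLift]
  · simpa [sq] using h₀
  · simpa [sq] using h₁
  · convert mul_mem (mul_mem (inv_mem h₁) hΔ) (inv_mem h₀) using 1
    simp [Δsq_eq_pow_σ_one_mul_σ_zero, pow_succ, mul_assoc, σ_braid_assoc]
  · convert mul_mem (mul_mem (inv_mem h₀) hΔ) (inv_mem h₁) using 1
    simp [Δsq, pow_succ, mul_assoc, ← σ_braid_assoc]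
  · simp [mul_assoc, ← σ_braid_assoc]
  · convert h₁ using 1
    simp [pow_succ, mul_assoc, σ_braid_assoc]
  · convert h₀ using 1
    simp [pow_succ, mul_assoc, ← σ_braid_assoc]

/-- `π : B₃ → S₃` is surjective and its kernel `P₃` is generated by
`σ₁²`, `σ₂²` and `Δ² = (σ₁σ₂)³`. -/
theorem surjective_and_ker_eq_closure :
    Function.Surjective πB3 ∧
      πB3.ker = Subgroup.closure {σ 0 ^ 2, σ 1 ^ 2, Δsq} := by
  refine ⟨fun p => ⟨braidLift p, πB3_braidLift p⟩, le_antisymm ?_ ?_⟩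
  · refine πB3.ker_le_of_lift_mul_inv_mem (t := braidLift) closure_range_σ
      (by simp [braidLift_one]) ?_
    rintro p _ ⟨i, rfl⟩
    rw [πB3_σ]
    exact braidLift_mul_σ_mul_inv_mem p i
  · rw [Subgroup.closure_le]
    simp +decide [Set.insert_subset_iff]
end

section
/- The quotient of B₃ by its center is isomorphic to PSL(2,ℤ): there is a group isomorphism between B₃ ⧸ Subgroup.center B₃ and Matrix.SpecialLinearGroup (Fin 2) ℤ ⧸ Subgroup.center (Matrix.SpecialLinearGroup (Fin 2) ℤ). -/
/-!
Send `σ₁ ↦ T` and `σ₂ ↦ S T S⁻¹`. Since `S` and `T` generate `SL(2, ℤ)`, this map is onto, so it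
carries central braids to `±1`. Conversely, `Δ = σ₁σ₂σ₁` and `τ = σ₁σ₂` generate `B₃` and satisfy
`Δ² = τ³`, which is therefore central; hence every braid is `Δ²ᵏ` times an alternating word
`Δᵉ (τ^{j₁}Δ) ⋯ (τ^{jₙ}Δ) τᶠ` with `e ∈ {0,1}`, `jᵢ ∈ {1,2}`, `f ∈ {0,1,2}`. The syllables `τΔ`
and `τ²Δ` map to `-[1 0; 1 1]` and `-[1 1; 0 1]`, so a nonempty product of them is `±` a
nonnegative non-diagonal matrix, and a word with syllables cannot map to `±1` (ping-pong).
So the kernel of `B₃ → PSL(2, ℤ)` is exactly the center of `B₃`.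
-/

open Subgroup MatrixGroups ModularGroup

section BraidRelation

variable {G : Type*} [Group G]

theorem sq_mul_mul_eq_pow_three_of_braid {a b : G} (h : a * b * a = b * a * b) :
    (a * b * a) ^ 2 = (a * b) ^ 3 := by
  calc (a * b * a) ^ 2 = a * b * a * (b * a * b) := by rw [pow_two, ← h]
    _ = (a * b) ^ 3 := by simp only [pow_three, mul_assoc]

theorem closure_mul_mul_pair (a b : G) : closure {a * b * a, a * b} = closure {a, b} := by
  have ha : a ∈ closure {a, b} := subset_closure (by simp)
  have hb : b ∈ closure {a, b} := subset_closure (by simp)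
  have haba : a * b * a ∈ closure {a * b * a, a * b} := subset_closure (by simp)
  have hab : a * b ∈ closure {a * b * a, a * b} := subset_closure (by simp)
  apply le_antisymm <;> rw [closure_le, Set.insert_subset_iff, Set.singleton_subset_iff]
  · exact ⟨mul_mem (mul_mem ha hb) ha, mul_mem ha hb⟩
  · have ha' := mul_mem (inv_mem hab) haba
    rw [show (a * b)⁻¹ * (a * b * a) = a by group] at ha'
    have hb' := mul_mem (inv_mem ha') hab
    rw [inv_mul_cancel_left] at hb'
    exact ⟨ha', hb'⟩

end BraidRelation

theorem Subgroup.center_le_comap_center_of_surjective {G H : Type*} [Group G] [Group H]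
    {f : G →* H} (hf : Function.Surjective f) : center G ≤ (center H).comap f := by
  intro g hg
  rw [mem_comap, mem_center_iff]
  intro h
  obtain ⟨g', rfl⟩ := hf h
  rw [← map_mul, ← map_mul, mem_center_iff.mp hg g']

section AlternatingWord

variable {G H : Type*} [Group G] [Group H]

def syllable (x y : G) (j : Fin 2) : G := y ^ ((j : ℕ) + 1) * x

def alternatingWord (x y : G) (e : Fin 2) (js : List (Fin 2)) (f : Fin 3) : G :=
  x ^ (e : ℕ) * (js.map (syllable x y)).prod * y ^ (f : ℕ)

theorem map_alternatingWord (φ : G →* H) (x y : G) (e : Fin 2) (js : List (Fin 2)) (f : Fin 3) :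
    φ (alternatingWord x y e js f) = alternatingWord (φ x) (φ y) e js f := by
  have hsyl : φ ∘ syllable x y = syllable (φ x) (φ y) := funext fun j => by simp [syllable]
  simp [alternatingWord, map_list_prod, hsyl]

def HasAlternatingNormalForm (x y g : G) : Prop :=
  ∃ (k : ℤ) (e : Fin 2) (js : List (Fin 2)) (f : Fin 3),
    g = (x ^ 2) ^ k * alternatingWord x y e js f

variable {x y : G}

theorem sq_mem_center_of_sq_eq_pow_three (hxy : x ^ 2 = y ^ 3)
    (hgen : closure {x, y} = ⊤) : x ^ 2 ∈ center G := by
  rw [← centralizer_univ, ← coe_top, ← hgen, centralizer_closure, mem_centralizer_iff]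
  rintro _ (rfl | rfl)
  · group
  · rw [hxy]; group

theorem HasAlternatingNormalForm.zpow_mul {g : G} (hg : HasAlternatingNormalForm x y g) (m : ℤ) :
    HasAlternatingNormalForm x y ((x ^ 2) ^ m * g) := by
  obtain ⟨k, e, js, f, rfl⟩ := hg
  exact ⟨m + k, e, js, f, by rw [zpow_add, mul_assoc]⟩

theorem hasAlternatingNormalForm_x_mul (e : Fin 2) (js : List (Fin 2)) (f : Fin 3) :
    HasAlternatingNormalForm x y (x * alternatingWord x y e js f) := by
  fin_cases e
  · exact ⟨0, 1, js, f, by simp [alternatingWord, mul_assoc]⟩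
  · exact ⟨1, 0, js, f, by simp [alternatingWord, mul_assoc, pow_two]⟩

theorem hasAlternatingNormalForm_y_mul (hxy : x ^ 2 = y ^ 3) (e : Fin 2) (js : List (Fin 2))
    (f : Fin 3) : HasAlternatingNormalForm x y (y * alternatingWord x y e js f) := by
  fin_cases e
  · rcases js with _ | ⟨j, js⟩
    · fin_cases f
      · exact ⟨0, 0, [], 1, by simp [alternatingWord]⟩
      · exact ⟨0, 0, [], 2, by simp [alternatingWord, pow_two]⟩
      · exact ⟨1, 0, [], 0, by simp [alternatingWord, hxy, pow_succ, mul_assoc]⟩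
    · fin_cases j
      · exact ⟨0, 0, 1 :: js, f, by simp [alternatingWord, syllable, mul_assoc, pow_two]⟩
      · exact ⟨1, 1, js, f, by simp [alternatingWord, syllable, mul_assoc, hxy, pow_succ]⟩
  · exact ⟨0, 0, 0 :: js, f, by simp [alternatingWord, syllable, mul_assoc]⟩

theorem HasAlternatingNormalForm.mul_left {a g : G} (hg : HasAlternatingNormalForm x y g)
    (hz : x ^ 2 ∈ center G)
    (ha : ∀ e js f, HasAlternatingNormalForm x y (a * alternatingWord x y e js f)) :
    HasAlternatingNormalForm x y (a * g) := by
  obtain ⟨k, e, js, f, rfl⟩ := hg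
  rw [← mul_assoc, ((zpow_mem hz k).comm a).symm, mul_assoc]
  exact (ha e js f).zpow_mul k

theorem hasAlternatingNormalForm_of_closure_eq_top (hxy : x ^ 2 = y ^ 3)
    (hgen : closure {x, y} = ⊤) (g : G) : HasAlternatingNormalForm x y g := by
  have hz := sq_mem_center_of_sq_eq_pow_three hxy hgen
  have hx {g : G} (hg : HasAlternatingNormalForm x y g) : HasAlternatingNormalForm x y (x * g) :=
    hg.mul_left hz hasAlternatingNormalForm_x_mul
  have hy {g : G} (hg : HasAlternatingNormalForm x y g) : HasAlternatingNormalForm x y (y * g) :=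
    hg.mul_left hz (hasAlternatingNormalForm_y_mul hxy)
  induction (hgen ▸ mem_top g : g ∈ closure {x, y}) using closure_induction_left with
  | one => exact ⟨0, 0, [], 0, by simp [alternatingWord]⟩
  | mul_left a ha g _ hg =>
    rcases ha with rfl | rfl
    exacts [hx hg, hy hg]
  | inv_mul_cancel a ha g _ hg =>
    rcases ha with h | h <;> subst a
    · rw [show x⁻¹ * g = (x ^ 2) ^ (-1 : ℤ) * (x * g) by group]
      exact (hx hg).zpow_mul _
    · rw [show y⁻¹ * g = (x ^ 2) ^ (-1 : ℤ) * (y * (y * g)) by rw [hxy]; group]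
      exact (hy (hy hg)).zpow_mul _

end AlternatingWord

namespace Matrix.SpecialLinearGroup

theorem mem_center_fin_two_iff {R : Type*} [CommRing R] [NoZeroDivisors R] {A : SL(2, R)} :
    A ∈ center SL(2, R) ↔ A = 1 ∨ A = -1 := by
  have hneg : scalar (Fin 2) (-1 : R) = ((-1 : SL(2, R)) : Matrix (Fin 2) (Fin 2) R) := by
    rw [map_neg, map_one, coe_neg, coe_one]
  rw [mem_center_iff, Fintype.card_fin]
  constructor
  · rintro ⟨r, hr, hA⟩
    rcases sq_eq_one_iff.mp hr with rfl | rfl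
    · exact Or.inl (Subtype.ext (by simp [← hA]))
    · exact Or.inr (Subtype.ext (hA.symm.trans hneg))
  · rintro (rfl | rfl)
    · exact ⟨1, one_pow _, by simp⟩
    · exact ⟨-1, by norm_num, hneg⟩

end Matrix.SpecialLinearGroup

def IsNonnegNondiag (P : Matrix (Fin 2) (Fin 2) ℤ) : Prop :=
  0 ≤ P 0 0 ∧ 0 ≤ P 0 1 ∧ 0 ≤ P 1 0 ∧ 0 ≤ P 1 1 ∧ 0 < P 0 1 + P 1 0

instance : DecidablePred IsNonnegNondiag := fun P => by unfold IsNonnegNondiag; infer_instance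

theorem IsNonnegNondiag.mul_left {A P : Matrix (Fin 2) (Fin 2) ℤ} (hA₀₀ : 1 ≤ A 0 0)
    (hA₀₁ : 0 ≤ A 0 1) (hA₁₀ : 0 ≤ A 1 0) (hA₁₁ : 1 ≤ A 1 1) (hP : IsNonnegNondiag P) :
    IsNonnegNondiag (A * P) := by
  obtain ⟨h₀₀, h₀₁, h₁₀, h₁₁, hoff⟩ := hP
  simp only [IsNonnegNondiag, Matrix.mul_apply, Fin.sum_univ_two]
  exact ⟨by positivity, by positivity, by positivity, by positivity, by nlinarith⟩

namespace ModularGroup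

local notation:1024 "↑ₘ" A:1024 => ((A : SL(2, ℤ)) : Matrix (Fin 2) (Fin 2) ℤ)

theorem isNonnegNondiag_neg_syllable_mul {P : Matrix (Fin 2) (Fin 2) ℤ}
    (hP : IsNonnegNondiag P) (j : Fin 2) :
    IsNonnegNondiag (-↑ₘ(syllable S⁻¹ (T * S)⁻¹ j) * P) := by
  match j with
  | 0 =>
    rw [show ↑ₘ(syllable S⁻¹ (T * S)⁻¹ 0) = -!![1, 0; 1, 1] by decide, neg_neg]
    exact hP.mul_left (by simp) (by simp) (by simp) (by simp)
  | 1 =>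
    rw [show ↑ₘ(syllable S⁻¹ (T * S)⁻¹ 1) = -!![1, 1; 0, 1] by decide, neg_neg]
    exact hP.mul_left (by simp) (by simp) (by simp) (by simp)

theorem isNonnegNondiag_or_neg_prod_syllable (j : Fin 2) (js : List (Fin 2)) :
    IsNonnegNondiag ↑ₘ(((j :: js).map (syllable S⁻¹ (T * S)⁻¹)).prod) ∨
      IsNonnegNondiag (-↑ₘ(((j :: js).map (syllable S⁻¹ (T * S)⁻¹)).prod)) := by
  induction js generalizing j with
  | nil => fin_cases j <;> decide
  | cons j' js ih =>
    rw [List.map_cons, List.prod_cons, Matrix.SpecialLinearGroup.coe_mul]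
    rcases ih j' with h | h
    · exact Or.inr (by rw [← neg_mul]; exact isNonnegNondiag_neg_syllable_mul h j)
    · exact Or.inl (by rw [← neg_mul_neg]; exact isNonnegNondiag_neg_syllable_mul h j)

theorem alternatingWord_mem_center_iff {e : Fin 2} {js : List (Fin 2)} {f : Fin 3} :
    alternatingWord S⁻¹ (T * S)⁻¹ e js f ∈ center SL(2, ℤ) ↔ e = 0 ∧ js = [] ∧ f = 0 := by
  refine ⟨fun h => ?_, by rintro ⟨rfl, rfl, rfl⟩; simp [alternatingWord, one_mem]⟩
  rw [Matrix.SpecialLinearGroup.mem_center_fin_two_iff] at h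
  rcases js with _ | ⟨j, js⟩
  · revert h
    fin_cases e <;> fin_cases f <;> decide
  · exfalso
    obtain ⟨c, hc, hW⟩ : ∃ c : SL(2, ℤ), (c = 1 ∨ c = -1) ∧
        ((j :: js).map (syllable S⁻¹ (T * S)⁻¹)).prod =
          (S⁻¹ ^ (e : ℕ))⁻¹ * c * ((T * S)⁻¹ ^ (f : ℕ))⁻¹ :=
      ⟨_, h, by simp only [alternatingWord]; group⟩
    have hpos := isNonnegNondiag_or_neg_prod_syllable j js
    rw [hW] at hpos
    -- none of the six matrices `S ^ e * (T * S) ^ f` is `±` a nonnegative non-diagonal matrix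
    revert hpos
    rcases hc with rfl | rfl <;> fin_cases e <;> fin_cases f <;> decide

end ModularGroup

namespace BraidGroup3

def σ₁ : BraidGroup3 := PresentedGroup.of 0
def σ₂ : BraidGroup3 := PresentedGroup.of 1

theorem σ₁_mul_σ₂_mul_σ₁ : σ₁ * σ₂ * σ₁ = σ₂ * σ₁ * σ₂ := by
  have h := PresentedGroup.one_of_mem (rels := braidRel3) rfl
  rw [← mul_inv_eq_one]
  simp only [map_mul, map_inv, mul_inv_rev, mul_assoc] at h ⊢
  exact h

theorem closure_σ₁_σ₂ : closure {σ₁, σ₂} = ⊤ := by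
  rw [← PresentedGroup.closure_range_of braidRel3]
  congr
  ext
  simp [Fin.exists_fin_two, σ₁, σ₂, eq_comm]

def toSL2Z : BraidGroup3 →* SL(2, ℤ) :=
  PresentedGroup.toGroup (f := ![T, S * T * S⁻¹]) <| by
    rintro _ rfl
    simp only [map_mul, map_inv, FreeGroup.lift_apply_of]
    decide

theorem toSL2Z_σ₁_mul_σ₂ : toSL2Z (σ₁ * σ₂) = (T * S)⁻¹ := by
  rw [map_mul, toSL2Z, σ₁, σ₂, PresentedGroup.toGroup.of, PresentedGroup.toGroup.of]
  decide

theorem toSL2Z_σ₁_mul_σ₂_mul_σ₁ : toSL2Z (σ₁ * σ₂ * σ₁) = S⁻¹ := by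
  rw [map_mul, toSL2Z_σ₁_mul_σ₂, toSL2Z, σ₁, PresentedGroup.toGroup.of]
  decide

theorem toSL2Z_surjective : Function.Surjective toSL2Z := by
  rw [← MonoidHom.range_eq_top, eq_top_iff, ← SpecialLinearGroup.SL2Z_generators, closure_le]
  rintro _ (rfl | rfl)
  · exact ⟨(σ₁ * σ₂ * σ₁)⁻¹, by rw [map_inv, toSL2Z_σ₁_mul_σ₂_mul_σ₁, inv_inv]⟩
  · exact ⟨σ₁, PresentedGroup.toGroup.of _⟩

theorem comap_toSL2Z_center : (center SL(2, ℤ)).comap toSL2Z = center BraidGroup3 := by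
  refine le_antisymm (fun g hg => ?_) (center_le_comap_center_of_surjective toSL2Z_surjective)
  have hxy : (σ₁ * σ₂ * σ₁) ^ 2 = (σ₁ * σ₂) ^ 3 :=
    sq_mul_mul_eq_pow_three_of_braid σ₁_mul_σ₂_mul_σ₁
  have hgen : closure {σ₁ * σ₂ * σ₁, σ₁ * σ₂} = ⊤ := by rw [closure_mul_mul_pair, closure_σ₁_σ₂]
  have hz := sq_mem_center_of_sq_eq_pow_three hxy hgen
  obtain ⟨k, e, js, f, rfl⟩ := hasAlternatingNormalForm_of_closure_eq_top hxy hgen g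
  have hzk := center_le_comap_center_of_surjective toSL2Z_surjective (zpow_mem hz k)
  have hw := mul_mem (inv_mem hzk) hg
  rw [inv_mul_cancel_left, mem_comap, map_alternatingWord, toSL2Z_σ₁_mul_σ₂_mul_σ₁,
    toSL2Z_σ₁_mul_σ₂, alternatingWord_mem_center_iff] at hw
  obtain ⟨rfl, rfl, rfl⟩ := hw
  simpa [alternatingWord] using zpow_mem hz k

end BraidGroup3

/-- `B₃` modulo its center is isomorphic to `PSL(2, ℤ)`. -/
theorem braidGroup3_mod_center_iso_PSL2Z :
    Nonempty ((BraidGroup3 ⧸ Subgroup.center BraidGroup3) ≃*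
      (Matrix.SpecialLinearGroup (Fin 2) ℤ ⧸
        Subgroup.center (Matrix.SpecialLinearGroup (Fin 2) ℤ))) := by
  let ψ := (QuotientGroup.mk' (center SL(2, ℤ))).comp BraidGroup3.toSL2Z
  have hψ : Function.Surjective ψ :=
    (QuotientGroup.mk'_surjective _).comp BraidGroup3.toSL2Z_surjective
  have hker : ψ.ker = center BraidGroup3 := by
    rw [← MonoidHom.comap_ker, QuotientGroup.ker_mk', BraidGroup3.comap_toSL2Z_center]
  exact ⟨(QuotientGroup.quotientMulEquivOfEq hker.symm).trans
    (QuotientGroup.quotientKerEquivOfSurjective ψ hψ)⟩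
end
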